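/- Let p > 1 and θ ∈ (0,1], and let e₁ ∈ ℝⁿ denote the first standard basis vector. Then the function f : ℝⁿ \ {0} → [0,∞) defined by f(a) = | |a+e₁|^p − |a|^p − 1 | / ( |a|^{p−θ} + |a|^θ ) is bounded on ℝⁿ \ {0}, i.e. there exists C > 0 such that f(a) ≤ C for all a ≠ 0. -/

import Mathlib

/-!
By the mean value theorem for `t ↦ t ^ p`, moving a point by `b` changes `‖·‖ ^ p` by at most
`p (‖a‖ + ‖b‖) ^ (p - 1) ‖b‖`. For `‖a‖ ≥ 1` this bounds `‖a + e₁‖ ^ p - ‖a‖ ^ p` by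
`O(‖a‖ ^ (p - 1)) ≤ O(‖a‖ ^ (p - θ))`; for `‖a‖ ≤ 1`, perturbing `e₁` by `a` instead bounds
`‖a + e₁‖ ^ p - 1` by `O(‖a‖)`, and both `‖a‖` and `‖a‖ ^ p` are at most `‖a‖ ^ θ`.
-/

open Real Set

lemma abs_rpow_sub_rpow_le {p x y M : ℝ} (hp : 1 ≤ p) (hx : x ∈ Icc 0 M) (hy : y ∈ Icc 0 M) :
    |y ^ p - x ^ p| ≤ p * M ^ (p - 1) * |y - x| := by
  refine (convex_Icc 0 M).norm_image_sub_le_of_norm_hasDerivWithin_le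
    (fun t _ ↦ (hasDerivAt_rpow_const (Or.inr hp)).hasDerivWithinAt) (fun t ht ↦ ?_) hx hy
  obtain ⟨ht0, htM⟩ := ht
  rw [Real.norm_eq_abs, abs_of_nonneg (by positivity)]
  gcongr

lemma abs_norm_add_rpow_sub_norm_rpow_le {E : Type*} [SeminormedAddCommGroup E] {p : ℝ}
    (hp : 1 ≤ p) (a b : E) :
    |‖a + b‖ ^ p - ‖a‖ ^ p| ≤ p * (‖a‖ + ‖b‖) ^ (p - 1) * ‖b‖ := by
  calc |‖a + b‖ ^ p - ‖a‖ ^ p| ≤ p * (‖a‖ + ‖b‖) ^ (p - 1) * |‖a + b‖ - ‖a‖| :=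
        abs_rpow_sub_rpow_le hp ⟨norm_nonneg _, le_add_of_nonneg_right (norm_nonneg b)⟩
          ⟨norm_nonneg _, norm_add_le a b⟩
    _ ≤ p * (‖a‖ + ‖b‖) ^ (p - 1) * ‖b‖ := by
        gcongr
        simpa using abs_norm_sub_norm_le (a + b) a

section UnitPerturbation

variable {E : Type*} [SeminormedAddCommGroup E] {p θ : ℝ} {a e : E}

lemma abs_norm_add_rpow_sub_sub_le_of_norm_le_one (hp : 1 ≤ p) (hθ : θ ≤ 1) (he : ‖e‖ = 1)
    (ha₀ : 0 < ‖a‖) (ha₁ : ‖a‖ ≤ 1) :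
    |‖a + e‖ ^ p - ‖a‖ ^ p - 1| ≤ (p * 2 ^ (p - 1) + 1) * ‖a‖ ^ θ := by
  have hlin : |‖a + e‖ ^ p - 1| ≤ p * 2 ^ (p - 1) * ‖a‖ := by
    have h := abs_norm_add_rpow_sub_norm_rpow_le hp e a
    rw [he, one_rpow, add_comm e] at h
    refine h.trans ?_
    gcongr
    linarith
  have hle_rpow : ∀ q, θ ≤ q → ‖a‖ ^ q ≤ ‖a‖ ^ θ := fun q hq ↦
    rpow_le_rpow_of_exponent_ge ha₀ ha₁ hq
  have hθ' : ‖a‖ ≤ ‖a‖ ^ θ := by simpa using hle_rpow 1 hθ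
  calc |‖a + e‖ ^ p - ‖a‖ ^ p - 1| = |(‖a + e‖ ^ p - 1) - ‖a‖ ^ p| := by rw [sub_right_comm]
    _ ≤ |‖a + e‖ ^ p - 1| + ‖a‖ ^ p := by
        simpa only [abs_of_nonneg (rpow_nonneg (norm_nonneg a) p)] using
          abs_sub (‖a + e‖ ^ p - 1) (‖a‖ ^ p)
    _ ≤ p * 2 ^ (p - 1) * ‖a‖ ^ θ + ‖a‖ ^ θ :=
        add_le_add (hlin.trans (by gcongr)) (hle_rpow p (by linarith))
    _ = (p * 2 ^ (p - 1) + 1) * ‖a‖ ^ θ := by ring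

lemma abs_norm_add_rpow_sub_sub_le_of_one_le_norm (hp : 1 ≤ p) (hθ : θ ≤ 1) (he : ‖e‖ = 1)
    (ha : 1 ≤ ‖a‖) :
    |‖a + e‖ ^ p - ‖a‖ ^ p - 1| ≤ (p * 2 ^ (p - 1) + 1) * ‖a‖ ^ (p - θ) := by
  have hlin : |‖a + e‖ ^ p - ‖a‖ ^ p| ≤ p * 2 ^ (p - 1) * ‖a‖ ^ (p - 1) := by
    have h := abs_norm_add_rpow_sub_norm_rpow_le hp a e
    rw [he, mul_one] at h
    refine h.trans ?_
    rw [mul_assoc, ← mul_rpow zero_le_two (by linarith)]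
    gcongr
    linarith
  calc |‖a + e‖ ^ p - ‖a‖ ^ p - 1| ≤ |‖a + e‖ ^ p - ‖a‖ ^ p| + 1 := by
        simpa using abs_sub (‖a + e‖ ^ p - ‖a‖ ^ p) 1
    _ ≤ p * 2 ^ (p - 1) * ‖a‖ ^ (p - θ) + ‖a‖ ^ (p - θ) :=
        add_le_add (hlin.trans (by gcongr)) (one_le_rpow ha (by linarith))
    _ = (p * 2 ^ (p - 1) + 1) * ‖a‖ ^ (p - θ) := by ring

end UnitPerturbation

theorem f_bounded_general (n : ℕ) (p θ : ℝ) (hp : 1 < p) (hθ1 : θ ≤ 1) :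
    ∃ C : ℝ, 0 < C ∧ ∀ a : EuclideanSpace ℝ (Fin (n + 1)), a ≠ 0 →
      |‖a + EuclideanSpace.single (0 : Fin (n + 1)) (1 : ℝ)‖ ^ p - ‖a‖ ^ p - 1| /
          (‖a‖ ^ (p - θ) + ‖a‖ ^ θ) ≤ C := by
  have he : ‖EuclideanSpace.single (0 : Fin (n + 1)) (1 : ℝ)‖ = 1 := by simp
  refine ⟨p * 2 ^ (p - 1) + 1, by positivity, fun a ha ↦ ?_⟩
  have ha₀ : 0 < ‖a‖ := norm_pos_iff.mpr ha
  rw [div_le_iff₀ (by positivity)]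
  rcases le_total ‖a‖ 1 with ha₁ | ha₁
  · refine (abs_norm_add_rpow_sub_sub_le_of_norm_le_one hp.le hθ1 he ha₀ ha₁).trans ?_
    gcongr
    exact le_add_of_nonneg_left (by positivity)
  · refine (abs_norm_add_rpow_sub_sub_le_of_one_le_norm hp.le hθ1 he ha₁).trans ?_
    gcongr
    exact le_add_of_nonneg_right (by positivity)

/-- Let `p > 1`, `θ ∈ (0,1]` and let `e₁` be the first standard basis
vector of `ℝⁿ` (`n ≥ 1`). Then the function
`f(a) = | ‖a+e₁‖^p − ‖a‖^p − 1 | / (‖a‖^{p−θ} + ‖a‖^θ)` is bounded on `ℝⁿ \ {0}`. -/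
theorem f_bounded (n : ℕ) (p θ : ℝ) (hp : 1 < p) (hθ0 : 0 < θ) (hθ1 : θ ≤ 1) :
    ∃ C : ℝ, 0 < C ∧ ∀ a : EuclideanSpace ℝ (Fin (n + 1)), a ≠ 0 →
      |‖a + EuclideanSpace.single (0 : Fin (n + 1)) (1 : ℝ)‖ ^ p - ‖a‖ ^ p - 1| /
          (‖a‖ ^ (p - θ) + ‖a‖ ^ θ) ≤ C :=
  f_bounded_general n p θ hp hθ1
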